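/- Let ω ≥ 1 be an integer, c ∈ ℝ, p_c(x) = 2x⁴ - (6c+2)x² + 8c, and λ̂_{c,ω} = min_{n ∈ ℤ, n ∉ {0, ±ω}} p_c(n/ω). With c_ω⁻, c_ω⁺ as defined via g(x) = x²(1-x²)/(4-3x²) (c_ω⁻ = max_{1≤n≤ω-1} g(n/ω), with c₁⁻ = -∞, and c_ω⁺ = min_{n > 2ω/√3} g(n/ω)), one has λ̂_{c,ω} > 0 if and only if c_ω⁻ < c < c_ω⁺, and λ̂_{c,ω} < 0 if and only if c < c_ω⁻ or c > c_ω⁺. -/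

import Mathlib

/-- The polynomial `p_c(x) = 2x⁴ - (6c+2)x² + 8c`. -/
def pc (c x : ℝ) : ℝ := 2 * x ^ 4 - (6 * c + 2) * x ^ 2 + 8 * c

/-- `g(x) = x²(1-x²)/(4-3x²)`. -/
noncomputable def gfun (x : ℝ) : ℝ := x ^ 2 * (1 - x ^ 2) / (4 - 3 * x ^ 2)

/-- `λ̂_{c,ω} = min_{n ∈ ℤ, n ∉ {0, ±ω}} p_c(n/ω)`. -/
noncomputable def lamHat (c : ℝ) (ω : ℤ) : ℝ :=
  sInf {y : ℝ | ∃ n : ℤ, n ≠ 0 ∧ n ≠ ω ∧ n ≠ -ω ∧ y = pc c ((n : ℝ) / (ω : ℝ))}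

/-- `c_ω⁻ = max_{1 ≤ n ≤ ω-1} g(n/ω)`, with convention `c₁⁻ = -∞`. -/
noncomputable def cMinusE (ω : ℤ) : EReal :=
  if ω = 1 then ⊥
  else ((sSup {y : ℝ | ∃ n : ℤ, 1 ≤ n ∧ n ≤ ω - 1 ∧ y = gfun ((n:ℝ)/(ω:ℝ))} : ℝ) : EReal)

/-- `c_ω⁺ = min_{n > 2ω/√3} g(n/ω)`. -/
noncomputable def cPlus (ω : ℤ) : ℝ :=
  sInf {y : ℝ | ∃ n : ℤ, 2 * (ω:ℝ) / Real.sqrt 3 < (n:ℝ) ∧ y = gfun ((n:ℝ)/(ω:ℝ))}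

/- ### Auxiliary lemmas -/

lemma pc_factor (c x : ℝ) (h : 4 - 3*x^2 ≠ 0) :
    pc c x = 2*(4-3*x^2)*(c - gfun x) := by
  unfold pc gfun; linear_combination (2*x^2*(1-x^2)) * mul_inv_cancel₀ h

lemma gfun_even (x : ℝ) : gfun (-x) = gfun x := by simp [gfun]

lemma three_sq_ne (n m : ℤ) (hn : n ≠ 0) : 3*n^2 ≠ 4*m^2 := by
  intro h
  have hirr : Irrational (Real.sqrt 3) := (Nat.prime_three).irrational_sqrt
  have hnr : (n:ℝ) ≠ 0 := Int.cast_ne_zero.mpr hn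
  have h3 : ((2*(m:ℝ)) / (n:ℝ))^2 = 3 := by
    have hc : 3*(n:ℝ)^2 = 4*(m:ℝ)^2 := by exact_mod_cast congrArg (Int.cast : ℤ → ℝ) h
    field_simp
    linarith
  have heq : Real.sqrt 3 = |2*(m:ℝ) / (n:ℝ)| := by
    rw [← h3]; exact Real.sqrt_sq_eq_abs _
  apply hirr
  refine ⟨|2*(m:ℚ)/(n:ℚ)|, ?_⟩
  rw [heq]; push_cast; ring_nf

lemma exists_min {S : Set ℤ} {f : ℤ → ℝ} (hne : S.Nonempty)
    (hfin : ∀ B : ℝ, {n | n ∈ S ∧ f n ≤ B}.Finite) :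
    ∃ m ∈ S, ∀ n ∈ S, f m ≤ f n := by
  obtain ⟨n₀, hn₀⟩ := hne
  have hF : {n | n ∈ S ∧ f n ≤ f n₀}.Finite := hfin (f n₀)
  have hFne : (hF.toFinset).Nonempty := ⟨n₀, by simp [hn₀]⟩
  obtain ⟨m, hmF, hmin⟩ := hF.toFinset.exists_min_image f hFne
  have hm : m ∈ S ∧ f m ≤ f n₀ := by simpa using hmF
  refine ⟨m, hm.1, fun n hn => ?_⟩
  by_cases hb : f n ≤ f n₀
  · exact hmin n (by simp [hn, hb])
  · exact le_trans (hm.2) (le_of_not_ge hb)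

lemma pc_large (c B x : ℝ) (hx : |6*c+2| + 8*|c| + |B| + 1 ≤ x^2) :
    B < pc c x := by
  unfold pc
  nlinarith [le_abs_self (6*c+2), neg_abs_le (6*c+2), le_abs_self c, neg_abs_le c,
    le_abs_self B, neg_abs_le B, abs_nonneg (6*c+2), abs_nonneg c, abs_nonneg B,
    sq_nonneg x, sq_nonneg (x^2 - (|6*c+2| + 8*|c| + |B| + 1))]

lemma gfun_large (B x : ℝ) (hx : 4/3 < x^2) (h : gfun x ≤ B) :
    x^2 < 3*|B| + 4*|B| + 2 := by
  have hd : 4 - 3*x^2 < 0 := by linarith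
  unfold gfun at h
  rw [div_le_iff_of_neg hd] at h
  nlinarith [le_abs_self B, neg_abs_le B, abs_nonneg B, sq_nonneg x]

lemma finite_of_sq_bound (ω : ℤ) (hω : 1 ≤ ω) (T : Set ℤ) (M : ℝ)
    (h : ∀ n ∈ T, ((n:ℝ)/(ω:ℝ))^2 < M) : T.Finite := by
  set A : ℤ := max ⌈M⌉ 1 with hA
  have hA1 : 1 ≤ A := le_max_right _ _
  have hAM : M ≤ (A:ℝ) := le_trans (Int.le_ceil M) (by exact_mod_cast le_max_left _ _)
  set K : ℤ := ω * A with hK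
  have hωr : (0:ℝ) < (ω:ℝ) := by exact_mod_cast lt_of_lt_of_le one_pos hω
  apply Set.Finite.subset (Set.finite_Icc (-K) K)
  intro n hn
  have h1 : ((n:ℝ)/(ω:ℝ))^2 < M := h n hn
  have h2 : (n:ℝ)^2 < M * (ω:ℝ)^2 := by
    rw [div_pow] at h1
    calc (n:ℝ)^2 = ((n:ℝ)^2/(ω:ℝ)^2) * (ω:ℝ)^2 := by field_simp
    _ < M * (ω:ℝ)^2 := by apply mul_lt_mul_of_pos_right h1 (by positivity)
  have h3 : (n:ℝ)^2 < ((K:ℤ):ℝ)^2 := by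
    have : ((K:ℤ):ℝ) = (ω:ℝ)*(A:ℝ) := by rw [hK]; push_cast; ring
    rw [this]
    have hA1r : (1:ℝ) ≤ (A:ℝ) := by exact_mod_cast hA1
    have hω1r : (1:ℝ) ≤ (ω:ℝ) := by exact_mod_cast hω
    nlinarith [mul_le_mul_of_nonneg_right hAM (sq_nonneg (ω:ℝ)),
      mul_nonneg (mul_nonneg (sub_nonneg.mpr hA1r) (le_trans zero_le_one hA1r)) (sq_nonneg (ω:ℝ))]
  have h4 : n^2 < K^2 := by exact_mod_cast h3
  have hK1 : 1 ≤ K := by nlinarith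
  constructor <;> nlinarith

lemma bridge (ω n : ℤ) (hω : 1 ≤ ω) :
    2*(ω:ℝ)/Real.sqrt 3 < (n:ℝ) ↔ (0 < n ∧ 4*ω^2 < 3*n^2) := by
  have hs : (Real.sqrt 3)^2 = 3 := Real.sq_sqrt (by norm_num)
  have hsp : 0 < Real.sqrt 3 := Real.sqrt_pos.mpr (by norm_num)
  have hωr : (1:ℝ) ≤ (ω:ℝ) := by exact_mod_cast hω
  constructor
  · intro h
    have hn0 : (0:ℝ) < (n:ℝ) := lt_trans (by positivity) h
    have h2 : 2*(ω:ℝ) < (n:ℝ) * Real.sqrt 3 := by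
      rw [div_lt_iff₀ hsp] at h; linarith
    have : 4*(ω:ℝ)^2 < 3*(n:ℝ)^2 := by nlinarith
    exact ⟨by exact_mod_cast hn0, by exact_mod_cast this⟩
  · rintro ⟨hn, hsq⟩
    have hn0 : (0:ℝ) < (n:ℝ) := by exact_mod_cast hn
    have hsq' : 4*(ω:ℝ)^2 < 3*(n:ℝ)^2 := by exact_mod_cast hsq
    rw [div_lt_iff₀ hsp]
    by_contra hc
    push_neg at hc
    nlinarith [mul_nonneg (sub_nonneg.mpr hc) (by positivity : (0:ℝ) ≤ 2*(ω:ℝ) + (n:ℝ)*Real.sqrt 3)]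

lemma denom_pos {n ω : ℤ} (hωr : (0:ℝ) < (ω:ℝ)) (h : 3*n^2 < 4*ω^2) :
    0 < 4 - 3*((n:ℝ)/(ω:ℝ))^2 := by
  have h' : 3*(n:ℝ)^2 < 4*(ω:ℝ)^2 := by exact_mod_cast h
  have h2 : ((n:ℝ)/(ω:ℝ))^2 < 4/3 := by
    rw [div_pow, div_lt_div_iff₀ (by positivity) (by norm_num)]; linarith
  linarith

lemma denom_neg {n ω : ℤ} (hωr : (0:ℝ) < (ω:ℝ)) (h : 4*ω^2 < 3*n^2) :
    4 - 3*((n:ℝ)/(ω:ℝ))^2 < 0 := by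
  have h' : 4*(ω:ℝ)^2 < 3*(n:ℝ)^2 := by exact_mod_cast h
  have h2 : 4/3 < ((n:ℝ)/(ω:ℝ))^2 := by
    rw [div_pow, div_lt_div_iff₀ (by norm_num) (by positivity)]; linarith
  linarith

lemma pc_pos_iff_dpos (c x : ℝ) (hd : 0 < 4-3*x^2) : (0 < pc c x ↔ gfun x < c) := by
  rw [pc_factor c x (ne_of_gt hd)]
  constructor <;> intro h <;> nlinarith

lemma pc_neg_iff_dpos (c x : ℝ) (hd : 0 < 4-3*x^2) : (pc c x < 0 ↔ c < gfun x) := by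
  rw [pc_factor c x (ne_of_gt hd)]
  constructor <;> intro h <;> nlinarith

lemma pc_pos_iff_dneg (c x : ℝ) (hd : 4-3*x^2 < 0) : (0 < pc c x ↔ c < gfun x) := by
  rw [pc_factor c x (ne_of_lt hd)]
  constructor <;> intro h <;> nlinarith

lemma pc_neg_iff_dneg (c x : ℝ) (hd : 4-3*x^2 < 0) : (pc c x < 0 ↔ gfun x < c) := by
  rw [pc_factor c x (ne_of_lt hd)]
  constructor <;> intro h <;> nlinarith

lemma gfun_pos {x : ℝ} (h0 : x ≠ 0) (h1 : x^2 < 1) : 0 < gfun x := by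
  have hx2 : 0 < x^2 := by positivity
  exact div_pos (by nlinarith) (by nlinarith)

lemma gfun_neg {x : ℝ} (h1 : 1 < x^2) (h2 : x^2 < 4/3) : gfun x < 0 := by
  have hx2 : 0 < x^2 := by linarith
  exact div_neg_of_neg_of_pos (by nlinarith) (by linarith)

/-- Attainment of the minimum defining `lamHat`. -/
lemma lamHat_spec (c : ℝ) (ω : ℤ) (hω : 1 ≤ ω) :
    ∃ m : ℤ, (m ≠ 0 ∧ m ≠ ω ∧ m ≠ -ω) ∧ lamHat c ω = pc c ((m:ℝ)/(ω:ℝ)) ∧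
      ∀ n : ℤ, n ≠ 0 → n ≠ ω → n ≠ -ω → lamHat c ω ≤ pc c ((n:ℝ)/(ω:ℝ)) := by
  set S : Set ℤ := {n | n ≠ 0 ∧ n ≠ ω ∧ n ≠ -ω} with hS
  set f : ℤ → ℝ := fun n => pc c ((n:ℝ)/(ω:ℝ)) with hf
  have hne : S.Nonempty := ⟨2*ω, by refine ⟨?_, ?_, ?_⟩ <;> omega⟩
  have hfin : ∀ B : ℝ, {n | n ∈ S ∧ f n ≤ B}.Finite := by
    intro B
    apply finite_of_sq_bound ω hω _ (|6*c+2| + 8*|c| + |B| + 1)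
    rintro n ⟨-, hb⟩
    by_contra hcon
    push_neg at hcon
    exact absurd hb (not_le.mpr (pc_large c B _ hcon))
  obtain ⟨m, hmS, hmin⟩ := exists_min hne hfin
  have hleast : IsLeast {y : ℝ | ∃ n : ℤ, n ≠ 0 ∧ n ≠ ω ∧ n ≠ -ω ∧ y = pc c ((n : ℝ) / (ω : ℝ))} (f m) := by
    constructor
    · exact ⟨m, hmS.1, hmS.2.1, hmS.2.2, rfl⟩
    · rintro y ⟨n, h1, h2, h3, rfl⟩
      exact hmin n ⟨h1, h2, h3⟩
  refine ⟨m, hmS, hleast.csInf_eq, fun n h1 h2 h3 => ?_⟩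
  rw [lamHat, hleast.csInf_eq]
  exact hmin n ⟨h1, h2, h3⟩

/-- Attainment of the minimum defining `cPlus`. -/
lemma cPlus_spec (ω : ℤ) (hω : 1 ≤ ω) :
    ∃ m : ℤ, (0 < m ∧ 4*ω^2 < 3*m^2) ∧ cPlus ω = gfun ((m:ℝ)/(ω:ℝ)) ∧
      ∀ n : ℤ, 0 < n → 4*ω^2 < 3*n^2 → cPlus ω ≤ gfun ((n:ℝ)/(ω:ℝ)) := by
  set S : Set ℤ := {n | 0 < n ∧ 4*ω^2 < 3*n^2} with hS
  set f : ℤ → ℝ := fun n => gfun ((n:ℝ)/(ω:ℝ)) with hf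
  have hne : S.Nonempty := ⟨2*ω, by constructor <;> nlinarith⟩
  have hfin : ∀ B : ℝ, {n | n ∈ S ∧ f n ≤ B}.Finite := by
    intro B
    apply finite_of_sq_bound ω hω _ (3*|B| + 4*|B| + 2)
    rintro n ⟨⟨hn0, hn2⟩, hb⟩
    have hωr : (0:ℝ) < (ω:ℝ) := by exact_mod_cast lt_of_lt_of_le one_pos hω
    have hx : 4/3 < ((n:ℝ)/(ω:ℝ))^2 := by
      have := denom_neg (n := n) hωr hn2; linarith
    exact gfun_large B _ hx hb
  obtain ⟨m, hmS, hmin⟩ := exists_min hne hfin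
  have hset : {y : ℝ | ∃ n : ℤ, 2 * (ω:ℝ) / Real.sqrt 3 < (n:ℝ) ∧ y = gfun ((n:ℝ)/(ω:ℝ))}
      = {y : ℝ | ∃ n : ℤ, (0 < n ∧ 4*ω^2 < 3*n^2) ∧ y = gfun ((n:ℝ)/(ω:ℝ))} := by
    ext y
    simp only [Set.mem_setOf_eq]
    constructor
    · rintro ⟨n, hn, rfl⟩; exact ⟨n, (bridge ω n hω).mp hn, rfl⟩
    · rintro ⟨n, hn, rfl⟩; exact ⟨n, (bridge ω n hω).mpr hn, rfl⟩
  have hleast : IsLeast {y : ℝ | ∃ n : ℤ, (0 < n ∧ 4*ω^2 < 3*n^2) ∧ y = gfun ((n:ℝ)/(ω:ℝ))} (f m) := by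
    constructor
    · exact ⟨m, hmS, rfl⟩
    · rintro y ⟨n, hn, rfl⟩
      exact hmin n hn
  have hcp : cPlus ω = f m := by rw [cPlus, hset]; exact hleast.csInf_eq
  exact ⟨m, hmS, hcp, fun n h1 h2 => hcp ▸ hmin n ⟨h1, h2⟩⟩

/-- Attainment of the maximum defining `cMinusE` for `ω ≥ 2`. -/
lemma cMinus_spec (ω : ℤ) (hω : 2 ≤ ω) :
    ∃ m : ℤ, (1 ≤ m ∧ m ≤ ω - 1) ∧
      sSup {y : ℝ | ∃ n : ℤ, 1 ≤ n ∧ n ≤ ω - 1 ∧ y = gfun ((n:ℝ)/(ω:ℝ))} = gfun ((m:ℝ)/(ω:ℝ)) ∧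
      ∀ n : ℤ, 1 ≤ n → n ≤ ω - 1 →
        gfun ((n:ℝ)/(ω:ℝ)) ≤ sSup {y : ℝ | ∃ n : ℤ, 1 ≤ n ∧ n ≤ ω - 1 ∧ y = gfun ((n:ℝ)/(ω:ℝ))} := by
  set I : Set ℝ := {y : ℝ | ∃ n : ℤ, 1 ≤ n ∧ n ≤ ω - 1 ∧ y = gfun ((n:ℝ)/(ω:ℝ))} with hI
  have himg : I = (fun n : ℤ => gfun ((n:ℝ)/(ω:ℝ))) '' (Set.Icc 1 (ω-1)) := by
    ext y
    simp only [hI, Set.mem_setOf_eq, Set.mem_image, Set.mem_Icc]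
    constructor
    · rintro ⟨n, h1, h2, rfl⟩; exact ⟨n, ⟨h1, h2⟩, rfl⟩
    · rintro ⟨n, ⟨h1, h2⟩, rfl⟩; exact ⟨n, h1, h2, rfl⟩
  have hfin : I.Finite := by rw [himg]; exact (Set.finite_Icc _ _).image _
  have hne : I.Nonempty := ⟨gfun ((1:ℝ)/(ω:ℝ)), 1, le_refl _, by omega, by norm_num⟩
  obtain ⟨m, h1, h2, heq⟩ := hne.csSup_mem hfin
  refine ⟨m, ⟨h1, h2⟩, heq, fun n hn1 hn2 => ?_⟩
  exact le_csSup hfin.bddAbove ⟨n, hn1, hn2, rfl⟩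

/-- `λ̂_{c,ω} > 0` iff `c_ω⁻ < c < c_ω⁺`, and `λ̂_{c,ω} < 0` iff `c < c_ω⁻` or
`c > c_ω⁺`. -/
theorem stmt12 (ω : ℤ) (hω : 1 ≤ ω) (c : ℝ) :
    (0 < lamHat c ω ↔ (cMinusE ω < (c : EReal) ∧ c < cPlus ω)) ∧
      (lamHat c ω < 0 ↔ ((c : EReal) < cMinusE ω ∨ cPlus ω < c)) := by
  have hωr : (0:ℝ) < (ω:ℝ) := by exact_mod_cast lt_of_lt_of_le one_pos hω
  obtain ⟨m₀, hm₀S, hlam_eq, hlam_min⟩ := lamHat_spec c ω hω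
  obtain ⟨p, ⟨hp0, hp2⟩, hcp_eq, hcp_min⟩ := cPlus_spec ω hω
  -- p is an admissible index
  have hpω : ω < p := by
    by_contra hcon
    push_neg at hcon
    nlinarith
  have hpS : p ≠ 0 ∧ p ≠ ω ∧ p ≠ -ω := ⟨by omega, by omega, by omega⟩
  -- even symmetry helper
  have hge : ∀ n : ℤ, gfun (((-n : ℤ):ℝ)/(ω:ℝ)) = gfun ((n:ℝ)/(ω:ℝ)) := by
    intro n
    push_cast
    rw [neg_div, gfun_even]
  -- cPlus bounds arbitrary-sign outer indices
  have hcp_min' : ∀ n : ℤ, 4*ω^2 < 3*n^2 → cPlus ω ≤ gfun ((n:ℝ)/(ω:ℝ)) := by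
    intro n hn
    rcases lt_trichotomy n 0 with h | h | h
    · rw [← hge n]
      exact hcp_min (-n) (by omega) (by nlinarith)
    · exfalso; subst h; nlinarith
    · exact hcp_min n h hn
  -- key positivity / negativity characterisations of lamHat
  have key1 : 0 < lamHat c ω ↔
      ∀ n : ℤ, n ≠ 0 → n ≠ ω → n ≠ -ω → 0 < pc c ((n:ℝ)/(ω:ℝ)) := by
    constructor
    · intro h n h1 h2 h3; exact lt_of_lt_of_le h (hlam_min n h1 h2 h3)
    · intro h; rw [hlam_eq]; exact h m₀ hm₀S.1 hm₀S.2.1 hm₀S.2.2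
  have key2 : lamHat c ω < 0 ↔
      ∃ n : ℤ, (n ≠ 0 ∧ n ≠ ω ∧ n ≠ -ω) ∧ pc c ((n:ℝ)/(ω:ℝ)) < 0 := by
    constructor
    · intro h; exact ⟨m₀, hm₀S, hlam_eq ▸ h⟩
    · rintro ⟨n, ⟨h1, h2, h3⟩, hneg⟩; exact lt_of_le_of_lt (hlam_min n h1 h2 h3) hneg
  -- outer-region arguments
  have houter_pos : ∀ n : ℤ, 4*ω^2 < 3*n^2 → c < cPlus ω → 0 < pc c ((n:ℝ)/(ω:ℝ)) := by
    intro n h4 hc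
    rw [pc_pos_iff_dneg c _ (denom_neg hωr h4)]
    exact lt_of_lt_of_le hc (hcp_min' n h4)
  have houter_neg : ∀ n : ℤ, 4*ω^2 < 3*n^2 → pc c ((n:ℝ)/(ω:ℝ)) < 0 → cPlus ω < c := by
    intro n h4 hneg
    rw [pc_neg_iff_dneg c _ (denom_neg hωr h4)] at hneg
    exact lt_of_le_of_lt (hcp_min' n h4) hneg
  -- positivity at p gives c < cPlus
  have hp_pos : (∀ n : ℤ, n ≠ 0 → n ≠ ω → n ≠ -ω → 0 < pc c ((n:ℝ)/(ω:ℝ))) → c < cPlus ω := by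
    intro h
    have := h p hpS.1 hpS.2.1 hpS.2.2
    rw [pc_pos_iff_dneg c _ (denom_neg hωr hp2)] at this
    rw [hcp_eq]; exact this
  by_cases h1 : ω = 1
  · -- the case ω = 1 : all admissible indices are outer
    subst h1
    have hbig : ∀ n : ℤ, n ≠ 0 → n ≠ 1 → n ≠ -1 → 4*(1:ℤ)^2 < 3*n^2 := by
      intro n hn0 hn1 hnm
      have h2 : 2 ≤ n ∨ n ≤ -2 := by omega
      rcases h2 with h | h <;> nlinarith
    rw [cMinusE, if_pos rfl]
    constructor
    · rw [key1]
      constructor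
      · intro h; exact ⟨bot_lt_iff_ne_bot.mpr (by simp), hp_pos h⟩
      · rintro ⟨-, hc⟩ n h1 h2 h3
        exact houter_pos n (hbig n h1 h2 h3) hc
    · rw [key2]
      constructor
      · rintro ⟨n, ⟨h1, h2, h3⟩, hneg⟩
        exact Or.inr (houter_neg n (hbig n h1 h2 h3) hneg)
      · rintro (h | h)
        · exact absurd h (not_lt_bot)
        · refine ⟨p, hpS, ?_⟩
          rw [pc_neg_iff_dneg c _ (denom_neg hωr hp2), ← hcp_eq]
          exact h
  · -- the case ω ≥ 2
    have hω2 : 2 ≤ ω := by omega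
    obtain ⟨q, ⟨hq1, hq2⟩, hcm_eq, hcm_max⟩ := cMinus_spec ω hω2
    rw [cMinusE, if_neg h1, hcm_eq, EReal.coe_lt_coe_iff, EReal.coe_lt_coe_iff]
    simp only [hcm_eq] at hcm_max
    set cm : ℝ := gfun ((q:ℝ)/(ω:ℝ)) with hcm
    have hqsq : q^2 < ω^2 := by nlinarith
    have hqx : ((q:ℝ)/(ω:ℝ))^2 < 1 := by
      rw [div_pow, div_lt_one (by positivity)]
      exact_mod_cast hqsq
    have hqx0 : (q:ℝ)/(ω:ℝ) ≠ 0 := by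
      apply div_ne_zero _ (ne_of_gt hωr)
      exact_mod_cast (by omega : q ≠ 0)
    have hcm_pos : 0 < cm := gfun_pos hqx0 hqx
    have hqS : q ≠ 0 ∧ q ≠ ω ∧ q ≠ -ω := ⟨by omega, by omega, by omega⟩
    have hq3 : 3*q^2 < 4*ω^2 := by nlinarith
    -- bound for inner indices of arbitrary sign with n² < ω²
    have hcm_max' : ∀ n : ℤ, n ≠ 0 → n^2 < ω^2 → gfun ((n:ℝ)/(ω:ℝ)) ≤ cm := by
      intro n hn0 hnsq
      rcases le_or_gt 0 n with h | h
      · refine hcm_max n (by omega) ?_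
        by_contra hc
        push_neg at hc
        nlinarith
      · have h2 : -n ≤ ω - 1 := by
          by_contra hc
          push_neg at hc
          nlinarith
        have := hcm_max (-n) (by omega) h2
        rw [hge n] at this
        exact this
    -- inner middle region 1 < x² < 4/3 : gfun negative
    have hmid : ∀ n : ℤ, ω^2 < n^2 → 3*n^2 < 4*ω^2 → gfun ((n:ℝ)/(ω:ℝ)) < 0 := by
      intro n hn1 hn2
      apply gfun_neg
      · rw [div_pow, lt_div_iff₀ (by positivity), one_mul]
        exact_mod_cast hn1
      · have := denom_pos hωr hn2; linarith
    constructor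
    · rw [key1]
      constructor
      · intro h
        refine ⟨?_, hp_pos h⟩
        have := h q hqS.1 hqS.2.1 hqS.2.2
        rw [pc_pos_iff_dpos c _ (denom_pos hωr hq3)] at this
        exact this
      · rintro ⟨hcl, hcr⟩ n h1 h2 h3
        rcases lt_trichotomy (3*n^2) (4*ω^2) with hlt | heq | hgt
        · rw [pc_pos_iff_dpos c _ (denom_pos hωr hlt)]
          have hne2 : n^2 ≠ ω^2 := by
            intro hh
            have : (n-ω)*(n+ω) = 0 := by nlinarith
            rcases mul_eq_zero.mp this with h | h <;> omega
          rcases lt_or_gt_of_ne hne2 with hin | hout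
          · exact lt_of_le_of_lt (hcm_max' n h1 hin) hcl
          · exact lt_trans (hmid n hout hlt) (lt_trans hcm_pos hcl)
        · exact absurd heq (three_sq_ne n ω h1)
        · exact houter_pos n hgt hcr
    · rw [key2]
      constructor
      · rintro ⟨n, ⟨h1, h2, h3⟩, hneg⟩
        rcases lt_trichotomy (3*n^2) (4*ω^2) with hlt | heq | hgt
        · left
          rw [pc_neg_iff_dpos c _ (denom_pos hωr hlt)] at hneg
          have hne2 : n^2 ≠ ω^2 := by
            intro hh
            have : (n-ω)*(n+ω) = 0 := by nlinarith
            rcases mul_eq_zero.mp this with h | h <;> omega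
          rcases lt_or_gt_of_ne hne2 with hin | hout
          · exact lt_of_lt_of_le hneg (hcm_max' n h1 hin)
          · exact lt_trans hneg (lt_trans (hmid n hout hlt) hcm_pos)
        · exact absurd heq (three_sq_ne n ω h1)
        · exact Or.inr (houter_neg n hgt hneg)
      · rintro (h | h)
        · refine ⟨q, hqS, ?_⟩
          rw [pc_neg_iff_dpos c _ (denom_pos hωr hq3)]
          exact h
        · refine ⟨p, hpS, ?_⟩
          rw [pc_neg_iff_dneg c _ (denom_neg hωr hp2), ← hcp_eq]
          exact h
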